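/- (The exponential and logarithmic maps are mutually inverse, direction 1.) Let κ < 0 and let x, y be points of the Poincaré ball of curvature κ with y ≠ x. Then exp^κ_x(log^κ_x(y)) = y. -/

import Mathlib

open Real Filter

open scoped RealInnerProductSpace

/-- Inverse hyperbolic tangent. -/
noncomputable def artanh (x : ℝ) : ℝ := (1 / 2) * Real.log ((1 + x) / (1 - x))

variable {E : Type*} [NormedAddCommGroup E] [InnerProductSpace ℝ E]

/-- Möbius (gyrovector) addition on the Poincaré ball of curvature `κ`. -/
noncomputable def mAdd (κ : ℝ) (x y : E) : E :=
  (1 - 2 * κ * ⟪x, y⟫ + κ ^ 2 * ‖x‖ ^ 2 * ‖y‖ ^ 2)⁻¹ •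
    ((1 - 2 * κ * ⟪x, y⟫ - κ * ‖y‖ ^ 2) • x + (1 + κ * ‖x‖ ^ 2) • y)

/-- Conformal factor `λκ(x) = 2 / (1 + κ‖x‖²)`. -/
noncomputable def lam (κ : ℝ) (x : E) : ℝ := 2 / (1 + κ * ‖x‖ ^ 2)

open Classical in
/-- Möbius scalar multiplication `r ⊗κ x`. -/
noncomputable def mSmul (κ r : ℝ) (x : E) : E :=
  if x = 0 then 0
  else ((1 / Real.sqrt (-κ)) * Real.tanh (r * _root_.artanh (Real.sqrt (-κ) * ‖x‖)) * ‖x‖⁻¹) • x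

open Classical in
/-- Exponential map of the Poincaré ball at `x` with curvature `κ`. -/
noncomputable def expMap (κ : ℝ) (x v : E) : E :=
  if v = 0 then x
  else mAdd κ x
    ((Real.tanh (Real.sqrt (-κ) * lam κ x * ‖v‖ / 2) / (Real.sqrt (-κ) * ‖v‖)) • v)

/-- Logarithmic map of the Poincaré ball at `x` with curvature `κ`. -/
noncomputable def logMap (κ : ℝ) (x y : E) : E :=
  ((2 / (Real.sqrt (-κ) * lam κ x)) * _root_.artanh (Real.sqrt (-κ) * ‖mAdd κ (-x) y‖) *
      ‖mAdd κ (-x) y‖⁻¹) • mAdd κ (-x) y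

/-- Geodesic distance of the Poincaré ball of curvature `κ`. -/
noncomputable def dK (κ : ℝ) (x y : E) : ℝ :=
  (2 / Real.sqrt (-κ)) * _root_.artanh (Real.sqrt (-κ) * ‖mAdd κ (-x) y‖)

/-- Membership in the Poincaré ball of curvature `κ`: `κ·‖x‖² > −1`. -/
def inBall (κ : ℝ) (x : E) : Prop := κ * ‖x‖ ^ 2 > -1

/-!
Put `w = (-x) ⊕κ y`. The vector `log^κ_x y` is the positive multiple of `w` whose length makes the
`tanh` in `exp^κ_x` undo the `artanh` in `log^κ_x`, so `exp^κ_x (log^κ_x y) = x ⊕κ w`, and Möbius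
left cancellation `x ⊕κ ((-x) ⊕κ y) = y` concludes. Left cancellation is a rational identity:
writing `w = a x + b y`, both `⟪x, w⟫` and `‖w‖²` are rational in `⟪x, y⟫`, `‖x‖²`, `‖y‖²`. For
`κ < 0` the denominators are positive on the ball, `w` lies in the ball, and `w ≠ 0` as `y ≠ x`.
-/

theorem artanh_eq_real_artanh {u : ℝ} (hu : u ∈ Set.Icc (-1) 1) :
    _root_.artanh u = Real.artanh u :=
  (Real.artanh_eq_half_log hu).symm

section PoincareBall

noncomputable def mAddDenom (κ : ℝ) (x y : E) : ℝ :=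
  1 - 2 * κ * ⟪x, y⟫ + κ ^ 2 * ‖x‖ ^ 2 * ‖y‖ ^ 2

variable {κ : ℝ} {x y : E}

theorem mAdd_eq (κ : ℝ) (x y : E) :
    mAdd κ x y = (mAddDenom κ x y)⁻¹ •
      ((1 - 2 * κ * ⟪x, y⟫ - κ * ‖y‖ ^ 2) • x + (1 + κ * ‖x‖ ^ 2) • y) :=
  rfl

@[simp]
theorem mAdd_zero_right (κ : ℝ) (x : E) : mAdd κ x 0 = x := by
  simp [mAdd]

omit [InnerProductSpace ℝ E] in
theorem inBall_neg : inBall κ (-x) ↔ inBall κ x := by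
  simp only [inBall, norm_neg]

omit [InnerProductSpace ℝ E] in
theorem inBall.one_add_mul_norm_sq_pos (hx : inBall κ x) : 0 < 1 + κ * ‖x‖ ^ 2 := by
  unfold inBall at hx
  linarith

omit [InnerProductSpace ℝ E] in
theorem lam_pos (hx : inBall κ x) : 0 < lam κ x :=
  div_pos two_pos hx.one_add_mul_norm_sq_pos

omit [InnerProductSpace ℝ E] in
theorem inBall.sqrt_neg_mul_norm_lt_one (hκ : κ ≤ 0) (hx : inBall κ x) :
    √(-κ) * ‖x‖ < 1 := by
  have hsq : (√(-κ) * ‖x‖) ^ 2 < 1 := by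
    rw [mul_pow, Real.sq_sqrt (neg_nonneg.2 hκ)]
    unfold inBall at hx
    linarith
  exact (pow_lt_one_iff_of_nonneg (by positivity) two_ne_zero).1 hsq

/-- Cauchy–Schwarz gives `mAddDenom κ x y ≥ (1 + κ‖x‖‖y‖)²`, and `κ²‖x‖²‖y‖² < 1` on the ball. -/
theorem mAddDenom_pos (hκ : κ ≤ 0) (hx : inBall κ x) (hy : inBall κ y) :
    0 < mAddDenom κ x y := by
  unfold inBall at hx hy
  obtain ⟨hxy₁, hxy₂⟩ := abs_le.1 (abs_real_inner_le_norm x y)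
  unfold mAddDenom
  nlinarith [mul_nonneg (norm_nonneg x) (norm_nonneg y), sq_nonneg (1 + κ * (‖x‖ * ‖y‖)),
    sq_nonneg (‖x‖ - ‖y‖)]

theorem mAddDenom_mul_one_add_norm_sq_mAdd (hD : mAddDenom κ x y ≠ 0) :
    mAddDenom κ x y * (1 + κ * ‖mAdd κ x y‖ ^ 2) = (1 + κ * ‖x‖ ^ 2) * (1 + κ * ‖y‖ ^ 2) := by
  have hnum : ‖(1 - 2 * κ * ⟪x, y⟫ - κ * ‖y‖ ^ 2) • x + (1 + κ * ‖x‖ ^ 2) • y‖ ^ 2 =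
      (1 - 2 * κ * ⟪x, y⟫ - κ * ‖y‖ ^ 2) ^ 2 * ‖x‖ ^ 2
        + 2 * (1 - 2 * κ * ⟪x, y⟫ - κ * ‖y‖ ^ 2) * (1 + κ * ‖x‖ ^ 2) * ⟪x, y⟫
        + (1 + κ * ‖x‖ ^ 2) ^ 2 * ‖y‖ ^ 2 := by
    rw [norm_add_sq_real, norm_smul, norm_smul, real_inner_smul_left, real_inner_smul_right,
      mul_pow, mul_pow, Real.norm_eq_abs, Real.norm_eq_abs, sq_abs, sq_abs]
    ring
  rw [mAdd_eq, norm_smul, mul_pow, hnum, norm_inv, Real.norm_eq_abs, inv_pow, sq_abs]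
  unfold mAddDenom at hD ⊢
  field_simp
  ring

theorem inBall_mAdd (hκ : κ ≤ 0) (hx : inBall κ x) (hy : inBall κ y) : inBall κ (mAdd κ x y) := by
  have hD := mAddDenom_pos hκ hx hy
  have hnorm := mAddDenom_mul_one_add_norm_sq_mAdd hD.ne'
  have hprod := mul_pos hx.one_add_mul_norm_sq_pos hy.one_add_mul_norm_sq_pos
  have : 0 < 1 + κ * ‖mAdd κ x y‖ ^ 2 := pos_of_mul_pos_right (hnorm ▸ hprod) hD.le
  unfold inBall
  linarith

theorem mAdd_neg_cancel_left (hx : 1 + κ * ‖x‖ ^ 2 ≠ 0) (hD : mAddDenom κ (-x) y ≠ 0) :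
    mAdd κ x (mAdd κ (-x) y) = y := by
  set w := mAdd κ (-x) y
  set D := mAddDenom κ (-x) y
  have hD_eq : D = 1 + 2 * κ * ⟪x, y⟫ + κ ^ 2 * ‖x‖ ^ 2 * ‖y‖ ^ 2 := by
    simp only [D, mAddDenom, inner_neg_left, norm_neg]
    ring
  set a := -(1 + 2 * κ * ⟪x, y⟫ - κ * ‖y‖ ^ 2) / D
  set b := (1 + κ * ‖x‖ ^ 2) / D
  have hw : w = a • x + b • y := by
    simp only [w, a, b, mAdd_eq, inner_neg_left, norm_neg]
    module
  have hxw : ⟪x, w⟫ = a * ‖x‖ ^ 2 + b * ⟪x, y⟫ := by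
    rw [hw, inner_add_right, real_inner_smul_right, real_inner_smul_right,
      real_inner_self_eq_norm_sq]
  have hww : ‖w‖ ^ 2 = a ^ 2 * ‖x‖ ^ 2 + 2 * a * b * ⟪x, y⟫ + b ^ 2 * ‖y‖ ^ 2 := by
    rw [hw, norm_add_sq_real, norm_smul, norm_smul, real_inner_smul_left, real_inner_smul_right,
      mul_pow, mul_pow, Real.norm_eq_abs, Real.norm_eq_abs, sq_abs, sq_abs]
    ring
  have hden : mAddDenom κ x w = (1 + κ * ‖x‖ ^ 2) * b := by
    rw [mAddDenom, hxw, hww]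
    simp only [a, b]
    field_simp
    rw [hD_eq]
    ring
  have hcoef : 1 - 2 * κ * ⟪x, w⟫ - κ * ‖w‖ ^ 2 + (1 + κ * ‖x‖ ^ 2) * a = 0 := by
    rw [hxw, hww]
    simp only [a, b]
    field_simp
    rw [hD_eq]
    ring
  have hb : b ≠ 0 := div_ne_zero hx hD
  rw [mAdd_eq, hden, inv_smul_eq_iff₀ (mul_ne_zero hx hb),
    show 1 - 2 * κ * ⟪x, w⟫ - κ * ‖w‖ ^ 2 = -((1 + κ * ‖x‖ ^ 2) * a) by linear_combination hcoef,
    hw]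
  module

theorem expMap_artanh_smul (hκ : κ < 0) {w : E} (hx : inBall κ x) (hw : inBall κ w)
    (hw0 : w ≠ 0) :
    expMap κ x ((2 / (√(-κ) * lam κ x) * _root_.artanh (√(-κ) * ‖w‖) * ‖w‖⁻¹) • w) =
      mAdd κ x w := by
  have hc : 0 < √(-κ) := Real.sqrt_pos.2 (neg_pos.2 hκ)
  have hw_pos : 0 < ‖w‖ := norm_pos_iff.2 hw0
  have hu : √(-κ) * ‖w‖ ∈ Set.Ioo 0 1 :=
    ⟨mul_pos hc hw_pos, hw.sqrt_neg_mul_norm_lt_one hκ.le⟩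
  have hartanh : _root_.artanh (√(-κ) * ‖w‖) = Real.artanh (√(-κ) * ‖w‖) :=
    artanh_eq_real_artanh ⟨by linarith [hu.1], hu.2.le⟩
  set s := 2 / (√(-κ) * lam κ x) * _root_.artanh (√(-κ) * ‖w‖) * ‖w‖⁻¹
  have hs : 0 < s := by
    have := hartanh ▸ Real.artanh_pos hu
    have := lam_pos hx
    positivity
  have htanh : Real.tanh (√(-κ) * lam κ x * ‖s • w‖ / 2) = √(-κ) * ‖w‖ := by
    rw [norm_smul, Real.norm_of_nonneg hs.le, ← Real.tanh_artanh ⟨by linarith [hu.1], hu.2⟩,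
      ← hartanh]
    have := (lam_pos hx).ne'
    simp only [s]
    field_simp
  rw [expMap, if_neg (smul_ne_zero hs.ne' hw0), htanh, norm_smul, Real.norm_of_nonneg hs.le,
    smul_smul, show √(-κ) * ‖w‖ / (√(-κ) * (s * ‖w‖)) * s = 1 by field_simp, one_smul]

end PoincareBall

theorem expMap_logMap
    (κ : ℝ) (hκ : κ < 0) (x y : E) (hx : inBall κ x) (hy : inBall κ y) (hxy : y ≠ x) :
    expMap κ x (logMap κ x y) = y := by
  have hx_neg : inBall κ (-x) := inBall_neg.2 hx
  have hcancel : mAdd κ x (mAdd κ (-x) y) = y :=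
    mAdd_neg_cancel_left hx.one_add_mul_norm_sq_pos.ne' (mAddDenom_pos hκ.le hx_neg hy).ne'
  have hw0 : mAdd κ (-x) y ≠ 0 := fun h ↦ hxy (by rw [← hcancel, h, mAdd_zero_right])
  rw [logMap, expMap_artanh_smul hκ hx (inBall_mAdd hκ.le hx_neg hy) hw0, hcancel]
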